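/- Suppose X_j, X_1, ..., X_p are comonotone random variables, each with continuous strictly increasing distribution function, and F_j is the distribution function of X_j. For \alpha, \beta \in (0,1), if c satisfies P(X_j \le c \mid \exists i: X_i \le VaR^i_\alpha) = \beta, then c = F_j^{-1}(\alpha\beta). -/
import Mathlib


open MeasureTheory

/-- Vulnerability-CoVaR under perfect positive dependence (comonotonicity):
if `X_j = g_j(U)` and `X_i = g_i(U)` for a uniform `U` and increasing `g`'s, and `c`
satisfies `P(X_j ≤ c ∣ ∃ i, X i ≤ VaR^i_α) = β`, then `c = F_j⁻¹(αβ)`. -/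
theorem vcovar_comonotone
    {Ω : Type*} [MeasurableSpace Ω] (μ : Measure Ω) [IsProbabilityMeasure μ]
    (p : ℕ) (hp : 0 < p)
    (U : Ω → ℝ) (hU : Measurable U)
    (hUnif : ∀ t ∈ Set.Icc (0:ℝ) 1, (μ {ω | U ω ≤ t}).toReal = t)
    (gj : ℝ → ℝ) (g : Fin p → ℝ → ℝ)
    (hgj : Monotone gj) (hg : ∀ i, Monotone (g i))
    (Xj : Ω → ℝ) (X : Fin p → Ω → ℝ)
    (hXj : ∀ ω, Xj ω = gj (U ω)) (hX : ∀ i ω, X i ω = g i (U ω))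
    (Fj : ℝ → ℝ) (F : Fin p → ℝ → ℝ)
    (hFj : ∀ x, (μ {ω | Xj ω ≤ x}).toReal = Fj x)
    (hF : ∀ i x, (μ {ω | X i ω ≤ x}).toReal = F i x)
    (hFjc : Continuous Fj) (hFjm : StrictMono Fj)
    (hFc : ∀ i, Continuous (F i)) (hFm : ∀ i, StrictMono (F i))
    (α β : ℝ) (hα : α ∈ Set.Ioo (0:ℝ) 1) (hβ : β ∈ Set.Ioo (0:ℝ) 1)
    (v : Fin p → ℝ) (hVaR : ∀ i, (μ {ω | X i ω ≤ v i}).toReal = α)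
    (c : ℝ)
    (hcond :
      (μ ({ω | Xj ω ≤ c} ∩ ⋃ i, {ω | X i ω ≤ v i})).toReal
        / (μ (⋃ i, {ω | X i ω ≤ v i})).toReal = β) :
    Fj c = α * β := by
  have hA : ∀ i : Fin p, {ω | X i ω ≤ v i} = {ω | g i (U ω) ≤ v i} := by
    intro i; ext ω; simp [hX]
  -- comparability of the downward-closed sets
  have hcomp : ∀ i j : Fin p,
      {ω | X i ω ≤ v i} ⊆ {ω | X j ω ≤ v j} ∨
      {ω | X j ω ≤ v j} ⊆ {ω | X i ω ≤ v i} := by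
    intro i j
    by_cases h : {ω | X i ω ≤ v i} ⊆ {ω | X j ω ≤ v j}
    · exact Or.inl h
    · right
      rw [Set.not_subset] at h
      obtain ⟨ω, hωi, hωj⟩ := h
      intro ω' hω'
      simp only [Set.mem_setOf_eq, hX] at *
      have hUle : U ω' ≤ U ω := by
        by_contra hlt
        push_neg at hlt
        exact hωj (le_trans (hg j hlt.le) hω')
      exact le_trans (hg i hUle) hωi
  haveI : Nonempty (Fin p) := ⟨⟨0, hp⟩⟩
  have hdir : Directed (· ≤ ·) (fun i : Fin p => {ω | X i ω ≤ v i}) := by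
    intro i j
    rcases hcomp i j with h | h
    · exact ⟨j, h, le_refl _⟩
    · exact ⟨i, le_refl _, h⟩
  obtain ⟨i0, hi0⟩ := hdir.finset_le Finset.univ
  have hUnion : (⋃ i, {ω | X i ω ≤ v i}) = {ω | X i0 ω ≤ v i0} := by
    apply Set.Subset.antisymm
    · exact Set.iUnion_subset fun i => hi0 i (Finset.mem_univ i)
    · exact Set.subset_iUnion (fun i : Fin p => {ω | X i ω ≤ v i}) i0
  rw [hUnion] at hcond
  have hα0 : α ≠ 0 := ne_of_gt hα.1
  have hcap : (μ ({ω | Xj ω ≤ c} ∩ {ω | X i0 ω ≤ v i0})).toReal = β * α := by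
    rw [hVaR i0] at hcond
    field_simp at hcond
    linarith [hcond]
  -- comparability of {Xj ≤ c} with {X i0 ≤ v i0}
  have hcompj : {ω | Xj ω ≤ c} ⊆ {ω | X i0 ω ≤ v i0} ∨
      {ω | X i0 ω ≤ v i0} ⊆ {ω | Xj ω ≤ c} := by
    by_cases h : {ω | Xj ω ≤ c} ⊆ {ω | X i0 ω ≤ v i0}
    · exact Or.inl h
    · right
      rw [Set.not_subset] at h
      obtain ⟨ω, hωi, hωj⟩ := h
      intro ω' hω'
      simp only [Set.mem_setOf_eq, hXj, hX] at *
      have hUle : U ω' ≤ U ω := by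
        by_contra hlt
        push_neg at hlt
        exact hωj (le_trans (hg i0 hlt.le) hω')
      exact le_trans (hgj hUle) hωi
  rcases hcompj with h | h
  · have : ({ω | Xj ω ≤ c} ∩ {ω | X i0 ω ≤ v i0}) = {ω | Xj ω ≤ c} :=
      Set.inter_eq_left.mpr h
    rw [this, hFj] at hcap
    rw [hcap]; ring
  · have : ({ω | Xj ω ≤ c} ∩ {ω | X i0 ω ≤ v i0}) = {ω | X i0 ω ≤ v i0} :=
      Set.inter_eq_right.mpr h
    rw [this, hVaR i0] at hcap
    have hb1 : β = 1 := mul_right_cancel₀ hα0 (by linarith : β * α = 1 * α)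
    linarith [hβ.2]
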